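/- For every ε ∈ (0, 1/√8) there exists n ∈ ℕ with n ≤ log(1/(√8 ε))/log(5/4) + 1 such that g^{(n)}(1/2 + ε) ≥ 1/2 + 1/√8. -/
import Mathlib


/-- The majority-vote function `g(p) = 3p² − 2p³`; `g^[n]` denotes its `n`-th iterate. -/
noncomputable def gmaj (p : ℝ) : ℝ := 3 * p ^ 2 - 2 * p ^ 3

theorem gmaj_iterate_first_phase (ε : ℝ) (hε0 : 0 < ε) (hε : ε < 1 / Real.sqrt 8) :
    ∃ n : ℕ, (n : ℝ) ≤ Real.log (1 / (Real.sqrt 8 * ε)) / Real.log (5 / 4) + 1 ∧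
      1 / 2 + 1 / Real.sqrt 8 ≤ gmaj^[n] (1 / 2 + ε) := by
  have hs8 : (0:ℝ) < Real.sqrt 8 := Real.sqrt_pos.mpr (by norm_num)
  have hs8sq : Real.sqrt 8 ^ 2 = 8 := Real.sq_sqrt (by norm_num)
  have hinv : 1 / Real.sqrt 8 ≤ 1/2 := by
    rw [div_le_div_iff₀ hs8 (by norm_num)]; nlinarith
  have hεhalf : ε ≤ 1/2 := le_trans hε.le hinv
  have key : ∀ n : ℕ, ∃ t : ℝ, gmaj^[n] (1/2 + ε) = 1/2 + t ∧ 0 < t ∧ t ≤ 1/2 ∧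
      (1 / Real.sqrt 8 ≤ t ∨ (5/4:ℝ)^n * ε ≤ t) := by
    intro n
    induction n with
    | zero => exact ⟨ε, by simp, hε0, hεhalf, Or.inr (by simp)⟩
    | succ n ih =>
      obtain ⟨t, heq, ht0, ht2, hcase⟩ := ih
      have htt : t^2 ≤ 1/4 := by nlinarith
      have hmono : t ≤ (3/2)*t - 2*t^3 := by
        nlinarith [mul_nonneg ht0.le (by linarith : (0:ℝ) ≤ 1/2 - 2*t^2)]
      refine ⟨(3/2)*t - 2*t^3, ?_, by linarith, by nlinarith [sq_nonneg (t - 1/2)], ?_⟩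
      · rw [Function.iterate_succ_apply', heq]; unfold gmaj; ring
      · rcases hcase with h | h
        · left; linarith
        · rcases le_or_gt t (1 / Real.sqrt 8) with hle | hgt
          · right
            have ht2' : t^2 ≤ 1/8 := by
              have h1 : t*t ≤ (1/Real.sqrt 8)*(1/Real.sqrt 8) :=
                mul_le_mul hle hle ht0.le (by positivity)
              have h2 : (1/Real.sqrt 8)*(1/Real.sqrt 8) = 1/8 := by
                rw [div_mul_div_comm, one_mul, ← sq, hs8sq]
              nlinarith
            have hstep : (5/4) * t ≤ (3/2)*t - 2*t^3 := by nlinarith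
            calc (5/4:ℝ)^(n+1) * ε = (5/4) * ((5/4)^n * ε) := by ring
              _ ≤ (5/4) * t := by nlinarith
              _ ≤ _ := hstep
          · left; linarith
  set L := Real.log (1 / (Real.sqrt 8 * ε)) / Real.log (5 / 4) with hL
  have hlog54 : (0:ℝ) < Real.log (5/4) := Real.log_pos (by norm_num)
  have hprodpos : (0:ℝ) < Real.sqrt 8 * ε := by positivity
  have hprodlt : Real.sqrt 8 * ε < 1 := by
    have := (lt_div_iff₀ hs8).mp hε
    nlinarith
  have hlognum : (0:ℝ) < Real.log (1 / (Real.sqrt 8 * ε)) := by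
    apply Real.log_pos
    rw [lt_div_iff₀ hprodpos]; nlinarith
  have hLpos : 0 < L := div_pos hlognum hlog54
  refine ⟨⌈L⌉₊, ?_, ?_⟩
  · exact_mod_cast (Nat.ceil_lt_add_one hLpos.le).le
  · obtain ⟨t, heq, ht0, ht2, hcase⟩ := key ⌈L⌉₊
    have hge : 1 / Real.sqrt 8 ≤ t := by
      rcases hcase with h | h
      · exact h
      · -- show (5/4)^⌈L⌉₊ * ε ≥ 1/√8
        have hnL : L ≤ (⌈L⌉₊ : ℝ) := Nat.le_ceil L
        have h1 : Real.log (1 / (Real.sqrt 8 * ε)) ≤ (⌈L⌉₊ : ℝ) * Real.log (5/4) := by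
          rw [hL] at hnL
          calc Real.log (1 / (Real.sqrt 8 * ε))
              = (Real.log (1 / (Real.sqrt 8 * ε)) / Real.log (5/4)) * Real.log (5/4) := by
                field_simp
            _ ≤ (⌈L⌉₊ : ℝ) * Real.log (5/4) := by
                apply mul_le_mul_of_nonneg_right hnL hlog54.le
        have h2 : Real.log (1 / (Real.sqrt 8 * ε)) ≤ Real.log ((5/4:ℝ)^⌈L⌉₊) := by
          rwa [Real.log_pow]
        have h3 : 1 / (Real.sqrt 8 * ε) ≤ (5/4:ℝ)^⌈L⌉₊ := by
          have := Real.exp_le_exp.mpr h2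
          rwa [Real.exp_log (by positivity), Real.exp_log (by positivity)] at this
        have h4 : 1 / Real.sqrt 8 ≤ (5/4:ℝ)^⌈L⌉₊ * ε := by
          calc 1 / Real.sqrt 8 = (1 / (Real.sqrt 8 * ε)) * ε := by field_simp
            _ ≤ (5/4:ℝ)^⌈L⌉₊ * ε := mul_le_mul_of_nonneg_right h3 hε0.le
        linarith
    rw [heq]; linarith
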